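/- arXiv:1603.09569 — 2 statements merged into one kernel-verified Lean document; each statement's English description precedes it below -/
import Mathlib

section
/- Let $m\geq 2$ and let $(a_1,\dots,a_m)$ be a sequence of positive integers with $\gcd(a_1,\dots,a_m)=1$, and set $d_i=\gcd(a_1,\dots,a_i)$. Assume that for each $2\le i\le m$, $a_i/d_i$ lies in the monoid generated by $a_1/d_{i-1},\dots,a_{i-1}/d_{i-1}$ over $\mathbb{Z}_{\ge0}$. Then for every $a$ in the numerical semigroup $a_1\mathbb{Z}_{\ge0}+\cdots+a_m\mathbb{Z}_{\ge0}$ there exists a unique tuple $(k_1,\dots,k_m)\in\mathbb{Z}_{\ge0}^m$ with $0\le k_i\le d_{i-1}/d_i-1$ for $2\le i\le m$ such that $\sum_{i=1}^m a_i k_i = a$. -/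
/-- `dseq a i = gcd(a 1, …, a i)`. -/
def dseq (a : ℕ → ℕ) (i : ℕ) : ℕ := Finset.gcd (Finset.Icc 1 i) a

/-- membership in the numerical semigroup generated by `a 1, …, a m`. -/
def InSemigroup (m : ℕ) (a : ℕ → ℕ) (x : ℕ) : Prop :=
  ∃ c : ℕ → ℕ, x = ∑ i ∈ Finset.Icc 1 m, c i * a i

/-- `(a 1, …, a m)` is a telescopic sequence. -/
def Telescopic (m : ℕ) (a : ℕ → ℕ) : Prop :=
  2 ≤ m ∧ (∀ i, 1 ≤ i → i ≤ m → 0 < a i) ∧ dseq a m = 1 ∧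
  ∀ i, 2 ≤ i → i ≤ m → ∃ c : ℕ → ℕ,
    a i / dseq a i = ∑ j ∈ Finset.Icc 1 (i - 1), c j * (a j / dseq a (i - 1))

/-- membership in the restricted exponent set `B(A_m)`. -/
def InB (m : ℕ) (a : ℕ → ℕ) (k : ℕ → ℕ) : Prop :=
  (∀ j, (j = 0 ∨ m < j) → k j = 0) ∧
  ∀ i, 2 ≤ i → i ≤ m → k i ≤ dseq a (i - 1) / dseq a i - 1


/-! Induction on `m`, with `D = d_{m-1}` and `e = d_{m-1}/d_m`. The telescopic condition says
that `e * a_m` lies in the semigroup generated by `a_1, …, a_{m-1}`, so reducing the coefficient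
of `a_m` modulo `e` writes every `x` as `y + a_m * r` with `r < e` and `y` in that smaller
semigroup. The last coordinate of a representation is forced: `D` divides the first `m - 1`
terms, and `a_m / d_m` is invertible modulo `e`. -/

open Finset Function

lemma dseq_succ (a : ℕ → ℕ) (n : ℕ) : dseq a (n + 1) = Nat.gcd (dseq a n) (a (n + 1)) := by
  rw [dseq, ← insert_Icc_right_eq_Icc_add_one (by omega), gcd_insert, Nat.gcd_comm]
  rfl

section Telescopic

variable {a : ℕ → ℕ}

lemma dseq_dvd {i j : ℕ} (hj : 1 ≤ j) (hji : j ≤ i) : dseq a i ∣ a j :=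
  Finset.gcd_dvd (mem_Icc.2 ⟨hj, hji⟩)

lemma dseq_pos {i : ℕ} (hi : 1 ≤ i) (ha : 0 < a 1) : 0 < dseq a i :=
  Nat.pos_of_ne_zero fun h => ha.ne' (Nat.eq_zero_of_zero_dvd (h ▸ dseq_dvd le_rfl hi))

lemma dseq_dvd_sum_mul (n : ℕ) (k : ℕ → ℕ) : dseq a n ∣ ∑ i ∈ Icc 1 n, a i * k i :=
  dvd_sum fun _ hi => (dseq_dvd (mem_Icc.1 hi).1 (mem_Icc.1 hi).2).mul_right _

lemma InSemigroup.add {m x y : ℕ} (hx : InSemigroup m a x) (hy : InSemigroup m a y) :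
    InSemigroup m a (x + y) := by
  obtain ⟨c, rfl⟩ := hx
  obtain ⟨c', rfl⟩ := hy
  exact ⟨c + c', by simp only [Pi.add_apply, add_mul, sum_add_distrib]⟩

lemma InSemigroup.mul_left {m x : ℕ} (q : ℕ) (hx : InSemigroup m a x) :
    InSemigroup m a (q * x) := by
  obtain ⟨c, rfl⟩ := hx
  exact ⟨q • c, by simp only [mul_sum, Pi.smul_apply, smul_eq_mul, mul_assoc]⟩

lemma InSemigroup.exists_eq_add_mul {n x e : ℕ} (hx : InSemigroup (n + 1) a x) (he : 0 < e)
    (hrel : InSemigroup n a (e * a (n + 1))) :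
    ∃ y r, InSemigroup n a y ∧ r < e ∧ x = y + a (n + 1) * r := by
  obtain ⟨c, rfl⟩ := hx
  refine ⟨∑ i ∈ Icc 1 n, c i * a i + c (n + 1) / e * (e * a (n + 1)), c (n + 1) % e,
    (InSemigroup.add ⟨c, rfl⟩ (hrel.mul_left _)), Nat.mod_lt _ he, ?_⟩
  rw [sum_Icc_succ_top (by omega)]
  conv_lhs => rw [← Nat.div_add_mod (c (n + 1)) e]
  ring

/-- The telescopic condition at `n + 1`, with the divisions cleared. -/
lemma inSemigroup_mul_of_telescopic {n : ℕ}
    (htel : ∃ c : ℕ → ℕ,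
      a (n + 1) / dseq a (n + 1) = ∑ j ∈ Icc 1 n, c j * (a j / dseq a n)) :
    InSemigroup n a (dseq a n / dseq a (n + 1) * a (n + 1)) := by
  obtain ⟨c, hc⟩ := htel
  have hg : dseq a (n + 1) ∣ dseq a n := dseq_succ a n ▸ Nat.gcd_dvd_left _ _
  have hga : dseq a (n + 1) ∣ a (n + 1) := dseq_dvd (by omega) le_rfl
  refine ⟨c, ?_⟩
  calc dseq a n / dseq a (n + 1) * a (n + 1) = a (n + 1) / dseq a (n + 1) * dseq a n := by
        rw [Nat.div_mul_right_comm hg, Nat.div_mul_right_comm hga, mul_comm]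
    _ = ∑ j ∈ Icc 1 n, c j * a j := by
        rw [hc, sum_mul]
        refine sum_congr rfl fun j hj => ?_
        rw [mul_assoc, Nat.div_mul_cancel (dseq_dvd (mem_Icc.1 hj).1 (mem_Icc.1 hj).2)]

lemma sum_Icc_mul_update_succ (n v : ℕ) (k : ℕ → ℕ) :
    ∑ i ∈ Icc 1 n, a i * update k (n + 1) v i = ∑ i ∈ Icc 1 n, a i * k i :=
  sum_congr rfl fun i hi => by rw [update_of_ne (by grind)]

lemma inB_succ_iff {n : ℕ} (hn : 1 ≤ n) {k : ℕ → ℕ} :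
    InB (n + 1) a k ↔
      InB n a (update k (n + 1) 0) ∧ k (n + 1) ≤ dseq a n / dseq a (n + 1) - 1 := by
  simp only [InB]
  constructor
  · rintro ⟨hsupp, hle⟩
    refine ⟨⟨fun j hj => ?_, fun i hi hin => ?_⟩, hle (n + 1) (by omega) le_rfl⟩
    · rcases eq_or_ne j (n + 1) with rfl | hj'
      · exact update_self ..
      · rw [update_of_ne hj']
        exact hsupp j (by omega)
    · rw [update_of_ne (by omega)]
      exact hle i hi (by omega)
  · rintro ⟨⟨hsupp, hle⟩, hlast⟩
    refine ⟨fun j hj => ?_, fun i hi hin => ?_⟩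
    · have := hsupp j (by omega)
      rwa [update_of_ne (by omega)] at this
    · rcases eq_or_lt_of_le hin with rfl | hin
      · exact hlast
      · have := hle i hi (by omega)
        rwa [update_of_ne (by omega)] at this

lemma existsUnique_of_inSemigroup_one (ha : 0 < a 1) {x : ℕ} (hx : InSemigroup 1 a x) :
    ∃! k : ℕ → ℕ, InB 1 a k ∧ ∑ i ∈ Icc 1 1, a i * k i = x := by
  obtain ⟨c, rfl⟩ := hx
  refine ⟨Pi.single 1 (c 1), ⟨⟨fun j hj => ?_, fun i hi hi1 => by omega⟩, ?_⟩, ?_⟩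
  · exact Pi.single_eq_of_ne (by omega) _
  · simp [mul_comm]
  · rintro k ⟨⟨hsupp, -⟩, hk⟩
    have hk1 : k 1 = c 1 := by
      simp only [Icc_self, sum_singleton] at hk
      exact Nat.eq_of_mul_eq_mul_left ha (hk.trans (mul_comm _ _))
    funext j
    rcases eq_or_ne j 1 with rfl | hj
    · simp [hk1]
    · rw [Pi.single_eq_of_ne hj]
      exact hsupp j (by omega)

end Telescopic

lemma eq_of_add_mul_eq_add_mul {D b r s u v : ℕ} (hD : 0 < D) (hr : r < D / Nat.gcd D b)
    (hs : s < D / Nat.gcd D b) (hu : D ∣ u) (hv : D ∣ v) (h : u + b * r = v + b * s) :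
    r = s := by
  obtain ⟨u, rfl⟩ := hu
  obtain ⟨v, rfl⟩ := hv
  have hmod : b * r ≡ b * s [MOD D] := by
    simpa only [Nat.ModEq, Nat.mul_add_mod] using congrArg (· % D) h
  exact (hmod.cancel_left_div_gcd hD).eq_of_lt_of_lt hr hs

theorem existsUnique_repr_of_telescopic {m : ℕ} {a : ℕ → ℕ} (hm : 1 ≤ m) (ha : 0 < a 1)
    (htel : ∀ i, 2 ≤ i → i ≤ m → ∃ c : ℕ → ℕ,
      a i / dseq a i = ∑ j ∈ Icc 1 (i - 1), c j * (a j / dseq a (i - 1)))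
    {x : ℕ} (hx : InSemigroup m a x) :
    ∃! k : ℕ → ℕ, InB m a k ∧ ∑ i ∈ Icc 1 m, a i * k i = x := by
  induction m, hm using Nat.le_induction generalizing x with
  | base => exact existsUnique_of_inSemigroup_one ha hx
  | succ n hn ih =>
    have hD : 0 < dseq a n := dseq_pos hn ha
    have he : 0 < dseq a n / dseq a (n + 1) := by
      rw [dseq_succ]
      exact Nat.div_pos (Nat.le_of_dvd hD (Nat.gcd_dvd_left _ _)) (Nat.gcd_pos_of_pos_left _ hD)
    have hrel := inSemigroup_mul_of_telescopic (htel (n + 1) (by omega) le_rfl)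
    obtain ⟨y, r, hy, hr, rfl⟩ := hx.exists_eq_add_mul he hrel
    obtain ⟨k', ⟨hk'B, rfl⟩, hk'uniq⟩ := ih (fun i hi hin => htel i hi (by omega)) hy
    have hk'last : k' (n + 1) = 0 := hk'B.1 (n + 1) (Or.inr (by omega))
    refine ⟨update k' (n + 1) r, ⟨(inB_succ_iff hn).2 ⟨?_, by rw [update_self]; omega⟩, ?_⟩, ?_⟩
    · rwa [update_idem, ← hk'last, update_eq_self]
    · rw [sum_Icc_succ_top (by omega), sum_Icc_mul_update_succ, update_self]
    rintro k ⟨hkB, hk⟩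
    rw [inB_succ_iff hn] at hkB
    rw [sum_Icc_succ_top (by omega)] at hk
    rw [dseq_succ] at he hr hkB
    have hkr : k (n + 1) = r := eq_of_add_mul_eq_add_mul hD (by omega) hr
      (dseq_dvd_sum_mul n k) (dseq_dvd_sum_mul n k') hk
    have hkk' : update k (n + 1) 0 = k' := by
      refine hk'uniq _ ⟨hkB.1, ?_⟩
      rw [sum_Icc_mul_update_succ]
      rw [hkr] at hk
      exact Nat.add_right_cancel hk
    rw [← hkk', update_idem, ← hkr, update_eq_self]

/-- Unique representation with exponents in B(A_m). -/
theorem stmt0 (m : ℕ) (a : ℕ → ℕ) (h : Telescopic m a)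
    (x : ℕ) (hx : InSemigroup m a x) :
    ∃! k : ℕ → ℕ, InB m a k ∧ ∑ i ∈ Finset.Icc 1 m, a i * k i = x := by
  obtain ⟨hm, hpos, -, htel⟩ := h
  exact existsUnique_repr_of_telescopic (by omega) (hpos 1 le_rfl (by omega)) htel hx
end

section
/- Let $m\ge2$ and for $2\le i\le m$ let $\ell_{i,j}$ ($1\le j\le i-1$) be nonnegative integers with $\sum_{j=1}^{i-1}a_j\ell_{i,j}=a_i d_{i-1}/d_i$ for positive integers $a_1,\dots,a_m$ with $d_i=\gcd(a_1,\dots,a_i)$. Consider the $(m-1)\times m$ matrix $M$ with rows indexed by $i=2,\dots,m$, where $M_{i,j}=-\ell_{i,j}$ for $j<i$, $M_{i,i}=d_{i-1}/d_i$, and $M_{i,j}=0$ for $j>i$. Let $\epsilon_k$ denote the determinant of the $(m-1)\times(m-1)$ matrix obtained by deleting the $k$-th column of $M$. Then $\epsilon_k=(-1)^{k+1}a_k$ for all $1\le k\le m$. -/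
/-!
Both `(a_1, …, a_m)` (by the defining relations of the `ℓ_{i,j}`) and the vector of signed
maximal minors `((-1)^{k+1} ε_k)_k` (by Laplace expansion) lie in the kernel of `M`. Deleting the
first column of `M` leaves a lower triangular matrix with diagonal `d_{i-1}/d_i`, whose
determinant `ε_1` telescopes to `d_1/d_m = a_1 ≠ 0`. So a kernel vector is determined by its first
coordinate, and the two vectors, both with first coordinate `a_1`, coincide.
-/

namespace Matrix

variable {R : Type*} [CommRing R] {n : ℕ}

def signedMaximalMinors (M : Matrix (Fin n) (Fin (n + 1)) R) (j : Fin (n + 1)) : R :=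
  (-1) ^ (j : ℕ) * (M.submatrix id j.succAbove).det

theorem mulVec_signedMaximalMinors (M : Matrix (Fin n) (Fin (n + 1)) R) :
    M *ᵥ M.signedMaximalMinors = 0 := by
  funext i
  -- expand along its first row the matrix obtained by putting a copy of row `i` on top of `M`
  have hsing : (of (Fin.cons (M i) M) : Matrix (Fin (n + 1)) (Fin (n + 1)) R).det = 0 :=
    det_zero_of_row_eq (Fin.succ_ne_zero i).symm rfl
  rw [det_succ_row_zero] at hsing
  rw [Pi.zero_apply, ← hsing, mulVec, dotProduct]
  refine Finset.sum_congr rfl fun j _ => ?_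
  change M i j * ((-1) ^ (j : ℕ) * (M.submatrix id j.succAbove).det) =
    (-1) ^ (j : ℕ) * M i j * (M.submatrix id j.succAbove).det
  ring

theorem eq_zero_of_mulVec_eq_zero_of_head_eq_zero [IsDomain R] {M : Matrix (Fin n) (Fin (n + 1)) R}
    (hM : (M.submatrix id Fin.succ).det ≠ 0) {x : Fin (n + 1) → R} (hx : M *ᵥ x = 0)
    (h0 : x 0 = 0) : x = 0 := by
  have htail : M.submatrix id Fin.succ *ᵥ Fin.tail x = 0 := by
    funext i
    simpa [mulVec, dotProduct, Fin.sum_univ_succ, h0, Fin.tail] using congrFun hx i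
  have := eq_zero_of_mulVec_eq_zero hM htail
  funext j
  cases j using Fin.cases with
  | zero => exact h0
  | succ j => exact congrFun this j

theorem det_submatrix_succ_smul_eq_smul_signedMaximalMinors [IsDomain R]
    {M : Matrix (Fin n) (Fin (n + 1)) R} (hM : (M.submatrix id Fin.succ).det ≠ 0)
    {x : Fin (n + 1) → R} (hx : M *ᵥ x = 0) :
    (M.submatrix id Fin.succ).det • x = x 0 • M.signedMaximalMinors := by
  rw [← sub_eq_zero]
  apply eq_zero_of_mulVec_eq_zero_of_head_eq_zero hM
  · rw [mulVec_sub, mulVec_smul, mulVec_smul, hx, mulVec_signedMaximalMinors, smul_zero,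
      smul_zero, sub_zero]
  · simp [signedMaximalMinors, mul_comm]

end Matrix

open Finset Matrix

theorem dseq_one (a : ℕ → ℕ) : dseq a 1 = a 1 := by
  simp [dseq]

theorem dseq_succ_dvd (a : ℕ → ℕ) (i : ℕ) : dseq a (i + 1) ∣ dseq a i :=
  dvd_gcd fun _ hj => gcd_dvd (Icc_subset_Icc_right i.le_succ hj)

theorem prod_dseq_div_mul_dseq (a : ℕ → ℕ) (n : ℕ) :
    (∏ i ∈ range n, dseq a (i + 1) / dseq a (i + 2)) * dseq a (n + 1) = a 1 := by
  induction n with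
  | zero => simp [dseq_one]
  | succ n ih => rw [prod_range_succ, mul_assoc, Nat.div_mul_cancel (dseq_succ_dvd a _), ih]

-- Row `i` and column `j` are row `i + 2` and column `j + 1` of the paper's matrix `M`.
def telescopicMatrix (n : ℕ) (a : ℕ → ℕ) (l : ℕ → ℕ → ℕ) : Matrix (Fin n) (Fin (n + 1)) ℤ :=
  of fun i j =>
    if (j : ℕ) ≤ i then -(l (i + 2) (j + 1) : ℤ)
    else if (j : ℕ) = i + 1 then ((dseq a (i + 1) / dseq a (i + 2) : ℕ) : ℤ)
    else 0

theorem telescopicMatrix_mulVec {n : ℕ} {a : ℕ → ℕ} {l : ℕ → ℕ → ℕ}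
    (hl : ∀ i, 2 ≤ i → i ≤ n + 1 →
      ∑ j ∈ Icc 1 (i - 1), a j * l i j = a i * (dseq a (i - 1) / dseq a i)) :
    telescopicMatrix n a l *ᵥ (fun j => (a (j + 1) : ℤ)) = 0 := by
  funext ⟨i, hi⟩
  set f : ℕ → ℤ := fun j =>
    (if j ≤ i then -(l (i + 2) (j + 1) : ℤ)
      else if j = i + 1 then ((dseq a (i + 1) / dseq a (i + 2) : ℕ) : ℤ) else 0) * a (j + 1)
  set c : ℤ := ((a (i + 2) * (dseq a (i + 1) / dseq a (i + 2)) : ℕ) : ℤ)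
  have hlow : ∑ j ∈ range (i + 1), f j = -c := by
    have hrow : ∑ j ∈ Icc 1 (i + 1), a j * l (i + 2) j =
        a (i + 2) * (dseq a (i + 1) / dseq a (i + 2)) := hl (i + 2) (by omega) (by omega)
    rw [← Ico_add_one_right_eq_Icc, sum_Ico_eq_sum_range, Nat.add_sub_cancel] at hrow
    rw [show c = _ from congrArg Nat.cast hrow.symm, Nat.cast_sum, ← sum_neg_distrib]
    refine sum_congr rfl fun j hj => ?_
    simp [f, Nat.lt_succ_iff.mp (mem_range.mp hj), add_comm 1 j, mul_comm]
  have hhigh : ∑ j ∈ Ico (i + 1) (n + 1), f j = c := by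
    rw [sum_eq_single_of_mem (i + 1) (mem_Ico.mpr ⟨le_rfl, by omega⟩)]
    · simp [f, c, mul_comm]
    · intro j hj hne
      simp only [mem_Ico] at hj
      simp [f, show ¬ j ≤ i by omega, hne]
  calc (telescopicMatrix n a l *ᵥ (fun j => (a (j + 1) : ℤ))) ⟨i, hi⟩
      = ∑ j ∈ range (n + 1), f j := Fin.sum_univ_eq_sum_range f (n + 1)
    _ = 0 := by
      rw [← sum_range_add_sum_Ico f (by omega : i + 1 ≤ n + 1), hlow, hhigh, neg_add_cancel]

theorem det_telescopicMatrix_submatrix_succ_mul_dseq (n : ℕ) (a : ℕ → ℕ) (l : ℕ → ℕ → ℕ) :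
    ((telescopicMatrix n a l).submatrix id Fin.succ).det * dseq a (n + 1) = a 1 := by
  have hlower : ((telescopicMatrix n a l).submatrix id Fin.succ).IsLowerTriangular := by
    intro i j hij
    have : (i : ℕ) < j := hij
    simp only [telescopicMatrix, submatrix_apply, id_eq, of_apply, Fin.val_succ]
    rw [if_neg (by omega), if_neg (by omega)]
  rw [det_of_isLowerTriangular _ hlower, ← prod_dseq_div_mul_dseq a n, Nat.cast_mul, Nat.cast_prod]
  congr 1
  simpa [telescopicMatrix] using
    Fin.prod_univ_eq_prod_range (fun i => ((dseq a (i + 1) / dseq a (i + 2) : ℕ) : ℤ)) n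

-- `k` is 0-based, so the paper's sign `(-1)^{k+1}` reads `(-1)^k`.
theorem stmt8_general (n : ℕ) (a : ℕ → ℕ)
    (ha : ∀ i, 1 ≤ i → i ≤ n + 1 → 0 < a i) (hgcd : dseq a (n + 1) = 1)
    (l : ℕ → ℕ → ℕ)
    (hl : ∀ i, 2 ≤ i → i ≤ n + 1 →
      ∑ j ∈ Finset.Icc 1 (i - 1), a j * l i j = a i * (dseq a (i - 1) / dseq a i))
    (M : Matrix (Fin n) (Fin (n + 1)) ℤ)
    (hM : ∀ i j, M i j =
      if ((j : ℕ) + 1) < ((i : ℕ) + 2) then -(l ((i : ℕ) + 2) ((j : ℕ) + 1) : ℤ)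
      else if ((j : ℕ) + 1) = ((i : ℕ) + 2) then
        ((dseq a ((i : ℕ) + 1) / dseq a ((i : ℕ) + 2) : ℕ) : ℤ)
      else 0)
    (k : Fin (n + 1)) :
    (M.submatrix id k.succAbove).det = (-1) ^ (k : ℕ) * (a ((k : ℕ) + 1) : ℤ) := by
  obtain rfl : M = telescopicMatrix n a l := by
    ext i j
    rw [hM, telescopicMatrix, of_apply]
    split_ifs <;> omega
  have hdet : ((telescopicMatrix n a l).submatrix id Fin.succ).det = a 1 := by
    simpa [hgcd] using det_telescopicMatrix_submatrix_succ_mul_dseq n a l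
  have ha₁ : (a 1 : ℤ) ≠ 0 := by exact_mod_cast (ha 1 le_rfl (by omega)).ne'
  have hminors := det_submatrix_succ_smul_eq_smul_signedMaximalMinors (hdet ▸ ha₁)
    (telescopicMatrix_mulVec hl)
  rw [hdet] at hminors
  have hk := congrFun (smul_right_injective _ ha₁ hminors) k
  rw [hk, signedMaximalMinors, ← mul_assoc, pow_mul_pow_eq_one _ (by norm_num), one_mul]

/-- The minors of the matrix M of the telescopic defining data satisfy
ε_k = (-1)^{k+1} a_k (with paper index k; here k is 0-based so the sign is (-1)^k). -/
theorem stmt8 (n : ℕ) (hn : 1 ≤ n) (a : ℕ → ℕ)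
    (ha : ∀ i, 1 ≤ i → i ≤ n + 1 → 0 < a i) (hgcd : dseq a (n + 1) = 1)
    (l : ℕ → ℕ → ℕ)
    (hl : ∀ i, 2 ≤ i → i ≤ n + 1 →
      ∑ j ∈ Finset.Icc 1 (i - 1), a j * l i j = a i * (dseq a (i - 1) / dseq a i))
    (M : Matrix (Fin n) (Fin (n + 1)) ℤ)
    (hM : ∀ i j, M i j =
      if ((j : ℕ) + 1) < ((i : ℕ) + 2) then -(l ((i : ℕ) + 2) ((j : ℕ) + 1) : ℤ)
      else if ((j : ℕ) + 1) = ((i : ℕ) + 2) then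
        ((dseq a ((i : ℕ) + 1) / dseq a ((i : ℕ) + 2) : ℕ) : ℤ)
      else 0)
    (k : Fin (n + 1)) :
    (M.submatrix id k.succAbove).det = (-1) ^ (k : ℕ) * (a ((k : ℕ) + 1) : ℤ) :=
  stmt8_general n a ha hgcd l hl M hM k
end
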